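/- Suppose π : X → S is G-invariant and the bundle homomorphism d'τ : X × 𝔤 → T_{X/S} is an isomorphism. Then φ : At_S(E^H) → At^τ_S(E^H), φ(u) = (u, (d'τ)^{-1}(d̃ϖ(u))), is an isomorphism of holomorphic vector bundles with inverse (u, v) ↦ u, and for any holomorphic splitting η^τ of the sequence 0 → ad(E^H) → At^τ_S(E^H) → X × 𝔤 → 0, the map η(y) := φ^{-1}(η^τ((d'τ)^{-1}(y))) is a holomorphic splitting of the relative Atiyah sequence 0 → ad(E^H) → At_S(E^H) → T_{X/S} → 0; in particular a relative holomorphic G-connection on E^H yields a relative holomorphic connection on E^H. -/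

import Mathlib

/-!
Statement 14 (Remark `conn-vs-G-conn` of the paper).

Setting: `π : X → S` is a surjective holomorphic proper submersion with connected fibers,
`H` a connected complex Lie group, `ϖ : E^H → X` a holomorphic principal `H`-bundle, and
`G` a connected complex Lie group with Lie algebra `𝔤` acting holomorphically on `X` by
`τ` so that `π` is `G`-invariant.  In the abelian category `C` of coherent analytic
sheaves on `X` we record: the relative Atiyah sequence
`0 → ad(E^H) → At_S(E^H) →^{d̃ϖ} T_{X/S} → 0`, the homomorphism
`d'τ : V = X × 𝔤 → T_{X/S}` induced by the action, and the bundle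
`At^τ_S(E^H) ⊆ At_S(E^H) ⊕ (X × 𝔤)` of pairs `(u, v)` with `d̃ϖ(u) = d'τ(v)`, i.e. the
fibre product of `d̃ϖ` and `d'τ`, which fits in the short exact sequence
`0 → ad(E^H) →^{ι₀} At^τ_S(E^H) →^{q} X × 𝔤 → 0`.  A relative holomorphic
`G`-connection is a holomorphic splitting of this sequence, and the relative `G`-Atiyah
class is its extension class in `H¹(X, V^* ⊗ ad(E^H)) = Ext¹(V, ad(E^H))`.
-/

open CategoryTheory CategoryTheory.Limits CategoryTheory.Abelian

universe v u

/-- The relative Atiyah sequence of `E^H → X → S` together with the data coming from a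
holomorphic `G`-action `τ` on `X` leaving `π` invariant: the trivial bundle `V = X × 𝔤`,
the map `d'τ : V → T_{X/S}`, and the bundle `At^τ_S(E^H)`, the subbundle of
`At_S(E^H) ⊕ (X × 𝔤)` of pairs `(u, v)` with `d̃ϖ(u) = d'τ(v)` (a fibre product),
with its short exact sequence `0 → ad(E^H) → At^τ_S(E^H) → X × 𝔤 → 0`. -/
structure RelGAtiyahSequence (C : Type u) [Category.{v} C] [Abelian C] where
  /-- the adjoint bundle `ad(E^H)` -/
  adE : C
  /-- the relative Atiyah bundle `At_S(E^H)` -/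
  At : C
  /-- the relative tangent bundle `T_{X/S}` -/
  T : C
  /-- the trivial bundle `V = X × 𝔤` with fibre the Lie algebra `𝔤` of `G` -/
  V : C
  /-- `At^τ_S(E^H)` -/
  Atτ : C
  /-- the inclusion `ι : ad(E^H) → At_S(E^H)` -/
  ι : adE ⟶ At
  /-- the projection `d̃ϖ : At_S(E^H) → T_{X/S}` -/
  p : At ⟶ T
  zero : ι ≫ p = 0
  /-- the relative Atiyah sequence is short exact -/
  shortExact : (ShortComplex.mk ι p zero).ShortExact
  /-- `d'τ : X × 𝔤 → T_{X/S}`, induced by the action `τ` -/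
  dτ : V ⟶ T
  /-- the projection `At^τ_S(E^H) → At_S(E^H)`, `(u, v) ↦ u` -/
  toAt : Atτ ⟶ At
  /-- the projection `q : At^τ_S(E^H) → X × 𝔤`, `(u, v) ↦ v` -/
  q : Atτ ⟶ V
  /-- `At^τ_S(E^H)` is the subbundle of `At_S(E^H) ⊕ (X × 𝔤)` of pairs `(u, v)` with
  `d̃ϖ(u) = d'τ(v)`, i.e. the fibre product of `d̃ϖ` and `d'τ` -/
  isPullback : IsPullback toAt q p dτ
  /-- the inclusion `ι₀ : ad(E^H) → At^τ_S(E^H)`, `u ↦ (ι(u), 0)` -/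
  ι0 : adE ⟶ Atτ
  ι0_toAt : ι0 ≫ toAt = ι
  ι0_q : ι0 ≫ q = 0
  /-- the sequence `0 → ad(E^H) → At^τ_S(E^H) → X × 𝔤 → 0` is short exact -/
  shortExactτ : (ShortComplex.mk ι0 q ι0_q).ShortExact

/-
When `d'τ` is invertible, the fibre product of `d̃ϖ` and `d'τ` is a pullback along an
isomorphism, so its first projection `(u, v) ↦ u` is itself an isomorphism, with inverse
`u ↦ (u, (d'τ)⁻¹(d̃ϖ u))`.  A section `η^τ` of `q` then gives `η^τ ≫ toAt ≫ d̃ϖ = d'τ` by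
commutativity of the square, and `(d'τ)⁻¹ ≫ η^τ ≫ toAt` is a section of `d̃ϖ`.
-/

namespace CategoryTheory

variable {C : Type u} [Category.{v} C] {P X Y Z : C}
  {fst : P ⟶ X} {snd : P ⟶ Y} {f : X ⟶ Z} {g : Y ⟶ Z}

theorem IsPullback.fst_comp_lift_id_eq_id (h : IsPullback fst snd f g) [IsIso g]
    (w : 𝟙 X ≫ f = (f ≫ inv g) ≫ g) :
    fst ≫ h.lift (𝟙 X) (f ≫ inv g) w = 𝟙 P := by
  have := h.isIso_fst_of_isIso
  rw [← IsIso.inv_eq_of_inv_hom_id (h.lift_fst _ _ w), IsIso.hom_inv_id]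

theorem CommSq.inv_comp_comp_fst_comp_eq_id (sq : CommSq fst snd f g) [IsIso g] {s : Y ⟶ P}
    (hs : s ≫ snd = 𝟙 Y) : (inv g ≫ s ≫ fst) ≫ f = 𝟙 Z := by
  have hsf : s ≫ fst ≫ f = g := by rw [sq.w, reassoc_of% hs]
  simp only [Category.assoc, hsf, IsIso.inv_hom_id]

end CategoryTheory

/-- Remark 2.3: suppose `π : X → S` is `G`-invariant and the bundle
homomorphism `d'τ : X × 𝔤 → T_{X/S}` is an isomorphism.  Then
`φ : At_S(E^H) → At^τ_S(E^H)`, `φ(u) = (u, (d'τ)⁻¹(d̃ϖ(u)))`, is an isomorphism of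
holomorphic vector bundles with inverse `(u, v) ↦ u`, and for any holomorphic splitting
`η^τ` of `0 → ad(E^H) → At^τ_S(E^H) → X × 𝔤 → 0`, the map
`η(y) := φ⁻¹(η^τ((d'τ)⁻¹(y)))` is a holomorphic splitting of the relative Atiyah
sequence `0 → ad(E^H) → At_S(E^H) → T_{X/S} → 0`; in particular a relative holomorphic
`G`-connection on `E^H` yields a relative holomorphic connection on `E^H`. -/
theorem statement14 {C : Type u} [Category.{v} C] [Abelian C]
    (B : RelGAtiyahSequence C) [IsIso B.dτ] :
    (B.isPullback.lift (𝟙 B.At) (B.p ≫ inv B.dτ) (by simp)) ≫ B.toAt = 𝟙 B.At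
    ∧ B.toAt ≫ (B.isPullback.lift (𝟙 B.At) (B.p ≫ inv B.dτ) (by simp)) = 𝟙 B.Atτ
    ∧ ∀ ητ : B.V ⟶ B.Atτ, ητ ≫ B.q = 𝟙 B.V →
        (inv B.dτ ≫ ητ ≫ B.toAt) ≫ B.p = 𝟙 B.T :=
  ⟨B.isPullback.lift_fst _ _ _, B.isPullback.fst_comp_lift_id_eq_id _,
    fun _ hητ ↦ B.isPullback.toCommSq.inv_comp_comp_fst_comp_eq_id hητ⟩
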